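/- For any finite word w = w_1...w_n, the G-defect D_G(w) equals the number of G-lacunas in w, i.e., the number of indices i ∈ {1,...,n} such that both the last letter w_i and the G-longest palindromic suffix of w_1...w_i fail to be G-unioccurrent in w_1...w_i. -/

import Mathlib

def IsMorphism {A : Type*} (f : List A → List A) : Prop :=
  ∀ v w : List A, f (v ++ w) = f v ++ f w

def IsAntimorphism {A : Type*} (f : List A → List A) : Prop :=
  ∀ v w : List A, f (v ++ w) = f w ++ f v

structure AMGroup (A : Type*) where
  carrier : Set (List A → List A)
  finite : carrier.Finite
  id_mem : id ∈ carrier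
  comp_mem : ∀ f ∈ carrier, ∀ g ∈ carrier, f ∘ g ∈ carrier
  inv_mem : ∀ f ∈ carrier, ∃ g ∈ carrier, f ∘ g = id ∧ g ∘ f = id
  morph_or_anti : ∀ f ∈ carrier, IsMorphism f ∨ IsAntimorphism f

/-- `v` is a `G`-palindrome: fixed by some antimorphism of `G`. -/
def GPal {A : Type*} (G : AMGroup A) (v : List A) : Prop :=
  ∃ Θ ∈ G.carrier, IsAntimorphism Θ ∧ Θ v = v

/-- The `G`-orbit (equivalence class) `[v]` of a word `v`. -/
def orbitG {A : Type*} (G : AMGroup A) (v : List A) : Set (List A) :=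
  {x : List A | ∃ μ ∈ G.carrier, x = μ v}

/-- `Pal_G(w)`: the set of `G`-classes of `G`-palindromic factors of `w`
(including the empty word). -/
def PalG {A : Type*} (G : AMGroup A) (w : List A) : Set (Set (List A)) :=
  {S | ∃ v : List A, v <:+: w ∧ GPal G v ∧ S = orbitG G v}

/-- `γ_G(w)`: the number of classes `[a]` of letters occurring in `w` that are
fixed by no antimorphism of `G`. -/
noncomputable def gammaG {A : Type*} (G : AMGroup A) (w : List A) : ℕ :=
  {S : Set (List A) | ∃ a : A, a ∈ w ∧
    (∀ Θ ∈ G.carrier, IsAntimorphism Θ → Θ [a] ≠ [a]) ∧ S = orbitG G [a]}.ncard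

/-- The `G`-defect of a finite word. -/
noncomputable def DG {A : Type*} (G : AMGroup A) (w : List A) : ℕ :=
  w.length + 1 - (PalG G w).ncard - gammaG G w

/-- `i` is a `G`-occurrence of `v` in `w` (an occurrence of some element of
`[v]` starting at position `i`). -/
def GOcc {A : Type*} (G : AMGroup A) (v w : List A) (i : ℕ) : Prop :=
  ∃ μ ∈ G.carrier, ∃ p s : List A, w = p ++ μ v ++ s ∧ p.length = i

/-- `v` is `G`-unioccurrent in `w`: `v` occurs in `w` and `w` has exactly one
`G`-occurrence of `v`. -/
def GUnioccurrent {A : Type*} (G : AMGroup A) (v w : List A) : Prop :=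
  v <:+: w ∧ ∃! i : ℕ, GOcc G v w i

/-- `s` is the `G`-longest palindromic suffix of `p`. -/
def IsGlps {A : Type*} (G : AMGroup A) (p s : List A) : Prop :=
  s <:+ p ∧ GPal G s ∧ ∀ t : List A, t <:+ p → GPal G t → t.length ≤ s.length


/-!
Induct on the word, appending one letter `x` to `w`, and let `s` be the `G`-longest palindromic
suffix of `wx`. A shorter palindromic suffix of `wx` lies inside `s` and so reappears, mirrored,
at the start of `s`; hence the only class `Pal_G` can gain is `[s]`, gained exactly when `s` is
`G`-unioccurrent in `wx`. Likewise `γ_G` grows exactly when `x` is `G`-unioccurrent and not a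
`G`-palindrome, and a lacuna appears exactly when neither `x` nor `s` is `G`-unioccurrent.
When `x` is `G`-unioccurrent, `s` is `G`-unioccurrent iff `x` is a `G`-palindrome, because a
palindromic suffix longer than `x` begins with a `G`-image of `x`. So every letter raises exactly
one of `#Pal_G`, `γ_G` and the number of lacunas by one, whence
`#Pal_G(w) + γ_G(w) + #lacunas = |w| + 1`.
-/

section Morphisms

variable {A : Type*} {f g : List A → List A}

theorem IsMorphism.map_nil (hf : IsMorphism f) : f [] = [] := by
  simpa using hf [] []

theorem IsAntimorphism.map_nil (hf : IsAntimorphism f) : f [] = [] := by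
  simpa using hf [] []

theorem IsMorphism.comp_isAntimorphism (hf : IsMorphism f) (hg : IsAntimorphism g) :
    IsAntimorphism (f ∘ g) := fun v w => by
  simp only [Function.comp_apply, hg v w, hf _ _]

theorem IsAntimorphism.comp_isMorphism (hf : IsAntimorphism f) (hg : IsMorphism g) :
    IsAntimorphism (f ∘ g) := fun v w => by
  simp only [Function.comp_apply, hg v w, hf _ _]

theorem IsAntimorphism.comp (hf : IsAntimorphism f) (hg : IsAntimorphism g) :
    IsMorphism (f ∘ g) := fun v w => by
  simp only [Function.comp_apply, hg v w, hf _ _]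

theorem IsMorphism.of_inverse (hf : IsMorphism f) (hgf : Function.LeftInverse g f)
    (hfg : Function.RightInverse g f) : IsMorphism g := fun v w => by
  conv_lhs => rw [← hfg v, ← hfg w, ← hf, hgf]

theorem IsAntimorphism.of_inverse (hf : IsAntimorphism f) (hgf : Function.LeftInverse g f)
    (hfg : Function.RightInverse g f) : IsAntimorphism g := fun v w => by
  conv_lhs => rw [← hfg v, ← hfg w, ← hf, hgf]

end Morphisms

namespace AMGroup

variable {A : Type*} (G : AMGroup A) {f : List A → List A}

theorem map_nil (hf : f ∈ G.carrier) : f [] = [] :=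
  (G.morph_or_anti f hf).elim IsMorphism.map_nil IsAntimorphism.map_nil

theorem exists_inverse (hf : f ∈ G.carrier) :
    ∃ g ∈ G.carrier, Function.LeftInverse g f ∧ Function.RightInverse g f := by
  obtain ⟨g, hg, hfg, hgf⟩ := G.inv_mem f hf
  exact ⟨g, hg, congrFun hgf, congrFun hfg⟩

theorem map_singleton_ne_nil (hf : f ∈ G.carrier) (a : A) : f [a] ≠ [] := by
  obtain ⟨g, hg, hgf, -⟩ := G.exists_inverse hf
  intro h
  simpa [h, G.map_nil hg] using hgf [a]

theorem length_le_length_map (hf : f ∈ G.carrier) (l : List A) : l.length ≤ (f l).length := by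
  induction l with
  | nil => simp
  | cons c t ih =>
    have hc := List.length_pos_iff.mpr (G.map_singleton_ne_nil hf c)
    rw [← List.singleton_append]
    rcases G.morph_or_anti f hf with h | h <;>
    · rw [h]
      simp only [List.length_append, List.length_singleton]
      omega

theorem length_map (hf : f ∈ G.carrier) (l : List A) : (f l).length = l.length := by
  obtain ⟨g, hg, hgf, -⟩ := G.exists_inverse hf
  refine le_antisymm ?_ (G.length_le_length_map hf l)
  simpa only [hgf l] using G.length_le_length_map hg (f l)

theorem exists_map_singleton (hf : f ∈ G.carrier) (a : A) : ∃ b, f [a] = [b] :=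
  List.length_eq_one_iff.mp (G.length_map hf [a])

theorem map_infix (hf : f ∈ G.carrier) {u v : List A} (h : u <:+: v) : f u <:+: f v := by
  obtain ⟨p, q, rfl⟩ := h
  rcases G.morph_or_anti f hf with hm | hm
  · exact ⟨f p, f q, by rw [hm, hm]⟩
  · exact ⟨f q, f p, by rw [hm, hm, List.append_assoc]⟩

end AMGroup

section Orbits

variable {A : Type*} {G : AMGroup A} {u v : List A}

theorem mem_orbitG_self (v : List A) : v ∈ orbitG G v := ⟨id, G.id_mem, rfl⟩

theorem orbitG_eq_of_mem (h : u ∈ orbitG G v) : orbitG G u = orbitG G v := by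
  obtain ⟨μ, hμ, rfl⟩ := h
  obtain ⟨g, hg, hgf, -⟩ := G.exists_inverse hμ
  ext y
  constructor
  · rintro ⟨ν, hν, rfl⟩
    exact ⟨ν ∘ μ, G.comp_mem ν hν μ hμ, rfl⟩
  · rintro ⟨ν, hν, rfl⟩
    exact ⟨ν ∘ g, G.comp_mem ν hν g hg, by simp [hgf v]⟩

theorem mem_orbitG_comm (h : u ∈ orbitG G v) : v ∈ orbitG G u :=
  orbitG_eq_of_mem h ▸ mem_orbitG_self v

theorem exists_eq_singleton_of_mem_orbitG {a : A} (h : u ∈ orbitG G [a]) : ∃ b, u = [b] := by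
  obtain ⟨μ, hμ, rfl⟩ := h
  exact G.exists_map_singleton hμ a

/-- Conjugating the antimorphism fixing `v` by `μ` gives an antimorphism fixing `μ v`. -/
theorem GPal.of_mem_orbitG (hv : GPal G v) (hu : u ∈ orbitG G v) : GPal G u := by
  obtain ⟨Θ, hΘ, hΘa, hΘv⟩ := hv
  obtain ⟨μ, hμ, rfl⟩ := hu
  obtain ⟨g, hg, hgμ, hμg⟩ := G.exists_inverse hμ
  refine ⟨μ ∘ Θ ∘ g, G.comp_mem μ hμ _ (G.comp_mem Θ hΘ g hg), ?_, by simp [hgμ v, hΘv]⟩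
  rcases G.morph_or_anti μ hμ with hm | hm
  · exact hm.comp_isAntimorphism (hΘa.comp_isMorphism (hm.of_inverse hgμ hμg))
  · exact hm.comp_isMorphism (hΘa.comp (hm.of_inverse hgμ hμg))

theorem gPal_nil (hanti : ∃ Θ ∈ G.carrier, IsAntimorphism Θ) : GPal G ([] : List A) := by
  obtain ⟨Θ, hΘ, hΘa⟩ := hanti
  exact ⟨Θ, hΘ, hΘa, G.map_nil hΘ⟩

end Orbits

section Occurrences

variable {A : Type*} {G : AMGroup A} {u v w : List A} {x : A}

def GOccursIn (G : AMGroup A) (v w : List A) : Prop :=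
  ∃ u ∈ orbitG G v, u <:+: w

theorem infix_of_append_singleton_eq {q r : List A} (h : w ++ [x] = q ++ v ++ r) (hr : r ≠ []) :
    v <:+: w := by
  obtain ⟨r', y, rfl⟩ := (List.eq_nil_or_concat r).resolve_left hr
  have h' : w ++ [x] = (q ++ v ++ r') ++ [y] := by simpa using h
  exact ⟨q, r', (List.append_inj' h' rfl).1.symm⟩

theorem gUnioccurrent_append_singleton_iff (hv : v <:+ w ++ [x]) :
    GUnioccurrent G v (w ++ [x]) ↔ ¬ GOccursIn G v w := by
  have hlast : GOcc G v (w ++ [x]) ((w ++ [x]).length - v.length) := by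
    obtain ⟨p, hp⟩ := hv
    exact ⟨id, G.id_mem, p, [], by simp [hp], by simp [← hp]⟩
  constructor
  · rintro ⟨-, i, -, huni⟩ ⟨_, ⟨μ, hμ, rfl⟩, p, s, rfl⟩
    have hfirst : GOcc G v (p ++ μ v ++ s ++ [x]) p.length :=
      ⟨μ, hμ, p, s ++ [x], by simp, rfl⟩
    have := (huni _ hfirst).trans (huni _ hlast).symm
    simp only [List.length_append, G.length_map hμ, List.length_singleton] at this
    omega
  · intro hnew
    refine ⟨hv.isInfix, _, hlast, ?_⟩
    rintro _ ⟨μ, hμ, p, s, heq, rfl⟩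
    rcases eq_or_ne s [] with rfl | hs
    · have := congrArg List.length heq
      simp only [List.length_append, G.length_map hμ, List.length_singleton,
        List.length_nil] at this ⊢
      omega
    · exact absurd ⟨μ v, ⟨μ, hμ, rfl⟩, infix_of_append_singleton_eq heq hs⟩ hnew

theorem gOccursIn_nil : GOccursIn G [] w := ⟨[], mem_orbitG_self [], List.nil_infix⟩

theorem gOccursIn_singleton_iff {a : A} : GOccursIn G [a] w ↔ ∃ b ∈ w, [b] ∈ orbitG G [a] := by
  constructor
  · rintro ⟨u, hu, hinf⟩
    obtain ⟨b, rfl⟩ := exists_eq_singleton_of_mem_orbitG hu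
    exact ⟨b, (List.singleton_infix_iff b w).mp hinf, hu⟩
  · rintro ⟨b, hb, hba⟩
    exact ⟨[b], hba, (List.singleton_infix_iff b w).mpr hb⟩

/-- The `G`-palindrome `u ++ v`, fixed by `Θ`, also reads `Θ v ++ Θ u`. -/
theorem gOccursIn_of_gPal_append_suffix (hs : u ++ v <:+ w ++ [x]) (hp : GPal G (u ++ v))
    (hu : u ≠ []) : GOccursIn G v w := by
  obtain ⟨Θ, hΘ, hΘa, hfix⟩ := hp
  obtain ⟨q, hq⟩ := hs
  refine ⟨Θ v, ⟨Θ, hΘ, rfl⟩, infix_of_append_singleton_eq (x := x) (q := q) (r := Θ u) ?_ ?_⟩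
  · rw [← hq, ← hfix, hΘa, List.append_assoc]
  · rw [← List.length_pos_iff, G.length_map hΘ]
    exact List.length_pos_iff.mpr hu

end Occurrences

section LongestPalindromicSuffix

variable {A : Type*} {G : AMGroup A} {p s t : List A}

theorem exists_isGlps (hanti : ∃ Θ ∈ G.carrier, IsAntimorphism Θ) (p : List A) :
    ∃ s, IsGlps G p s := by
  classical
  let P n := ∃ s, s <:+ p ∧ GPal G s ∧ s.length = n
  obtain ⟨s, hs, hpal, hlen⟩ : P (Nat.findGreatest P p.length) :=
    Nat.findGreatest_spec (Nat.zero_le _) ⟨[], List.nil_suffix, gPal_nil hanti, rfl⟩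
  exact ⟨s, hs, hpal, fun t ht hpt => hlen ▸ Nat.le_findGreatest ht.length_le ⟨t, ht, hpt, rfl⟩⟩

theorem IsGlps.unique (hs : IsGlps G p s) (ht : IsGlps G p t) : s = t :=
  (List.suffix_of_suffix_length_le hs.1 ht.1 (ht.2.2 s hs.1 hs.2.1)).eq_of_length
    (le_antisymm (ht.2.2 s hs.1 hs.2.1) (hs.2.2 t ht.1 ht.2.1))

end LongestPalindromicSuffix

theorem ncard_eq_add_ite_of_subset_insert {α : Type*} {S T : Set α} {a : α} {P : Prop}
    [Decidable P] (hS : S.Finite) (hST : S ⊆ T) (hTS : T ⊆ insert a S)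
    (hP : a ∈ T ∧ a ∉ S ↔ P) : T.ncard = S.ncard + if P then 1 else 0 := by
  split_ifs with h
  · obtain ⟨haT, haS⟩ := hP.mpr h
    rw [hTS.antisymm (Set.insert_subset haT hST), Set.ncard_insert_of_notMem haS hS]
  · have hTS' : T ⊆ S := fun b hb => by
      rcases hTS hb with rfl | hb
      · by_contra hbS
        exact h (hP.mp ⟨hb, hbS⟩)
      · exact hb
    rw [hTS'.antisymm hST, add_zero]

section Counting

variable {A : Type*} {G : AMGroup A} {s v w : List A} {x : A}

theorem orbitG_mem_palG_iff (hv : GPal G v) : orbitG G v ∈ PalG G w ↔ GOccursIn G v w := by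
  constructor
  · rintro ⟨u, hinf, -, heq⟩
    exact ⟨u, heq ▸ mem_orbitG_self u, hinf⟩
  · rintro ⟨u, hu, hinf⟩
    exact ⟨u, hinf, hv.of_mem_orbitG hu, (orbitG_eq_of_mem hu).symm⟩

theorem palG_finite (w : List A) : (PalG G w).Finite :=
  (w.sublists.finite_toSet.image (orbitG G)).subset <| by
    rintro _ ⟨v, hinf, -, rfl⟩
    exact ⟨v, List.mem_sublists.mpr hinf.sublist, rfl⟩

theorem palG_mono {w' : List A} (h : w <:+: w') : PalG G w ⊆ PalG G w' := by
  rintro _ ⟨v, hinf, hv, rfl⟩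
  exact ⟨v, hinf.trans h, hv, rfl⟩

theorem palG_append_singleton_subset (hs : IsGlps G (w ++ [x]) s) :
    PalG G (w ++ [x]) ⊆ insert (orbitG G s) (PalG G w) := by
  rintro _ ⟨v, hinf, hv, rfl⟩
  by_cases hocc : GOccursIn G v w
  · exact Or.inr ((orbitG_mem_palG_iff hv).mpr hocc)
  have hvs : v <:+ w ++ [x] := (List.infix_concat_iff.mp hinf).resolve_right
    fun h => hocc ⟨v, mem_orbitG_self v, h⟩
  obtain ⟨u, rfl⟩ := List.suffix_of_suffix_length_le hvs hs.1 (hs.2.2 v hvs hv)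
  rcases eq_or_ne u [] with rfl | hu
  · exact Or.inl rfl
  exact absurd (gOccursIn_of_gPal_append_suffix hs.1 hs.2.1 hu) hocc

open scoped Classical in
theorem ncard_palG_append_singleton (hs : IsGlps G (w ++ [x]) s) :
    (PalG G (w ++ [x])).ncard =
      (PalG G w).ncard + if GUnioccurrent G s (w ++ [x]) then 1 else 0 :=
  ncard_eq_add_ite_of_subset_insert (palG_finite w) (palG_mono (List.prefix_append w [x]).isInfix)
    (palG_append_singleton_subset hs) <| by
      rw [gUnioccurrent_append_singleton_iff hs.1, orbitG_mem_palG_iff hs.2.1,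
        orbitG_mem_palG_iff hs.2.1]
      exact and_iff_right ⟨s, mem_orbitG_self s, hs.1.isInfix⟩

def gammaSet (G : AMGroup A) (w : List A) : Set (Set (List A)) :=
  {S | ∃ a ∈ w, ¬ GPal G [a] ∧ S = orbitG G [a]}

theorem gammaG_eq_ncard_gammaSet : gammaG G w = (gammaSet G w).ncard := by
  simp [gammaG, gammaSet, GPal]

theorem orbitG_singleton_mem_gammaSet_iff {a : A} :
    orbitG G [a] ∈ gammaSet G w ↔ ¬ GPal G [a] ∧ GOccursIn G [a] w := by
  constructor
  · rintro ⟨b, hb, hbp, heq⟩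
    have hba : [b] ∈ orbitG G [a] := heq ▸ mem_orbitG_self [b]
    exact ⟨fun ha => hbp (ha.of_mem_orbitG hba), gOccursIn_singleton_iff.mpr ⟨b, hb, hba⟩⟩
  · rintro ⟨ha, hocc⟩
    obtain ⟨b, hb, hba⟩ := gOccursIn_singleton_iff.mp hocc
    exact ⟨b, hb, fun hbp => ha (hbp.of_mem_orbitG (mem_orbitG_comm hba)),
      (orbitG_eq_of_mem hba).symm⟩

theorem gammaSet_finite (w : List A) : (gammaSet G w).Finite :=
  (w.finite_toSet.image fun a => orbitG G [a]).subset <| by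
    rintro _ ⟨a, ha, -, rfl⟩
    exact ⟨a, ha, rfl⟩

theorem gammaSet_mono {w' : List A} (h : w ⊆ w') : gammaSet G w ⊆ gammaSet G w' := by
  rintro _ ⟨a, ha, hap, rfl⟩
  exact ⟨a, h ha, hap, rfl⟩

theorem gammaSet_append_singleton_subset :
    gammaSet G (w ++ [x]) ⊆ insert (orbitG G [x]) (gammaSet G w) := by
  rintro _ ⟨a, ha, hap, rfl⟩
  rcases List.mem_append.mp ha with ha | ha
  · exact Or.inr ⟨a, ha, hap, rfl⟩
  · rw [List.mem_singleton.mp ha]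
    exact Or.inl rfl

open scoped Classical in
theorem ncard_gammaSet_append_singleton :
    (gammaSet G (w ++ [x])).ncard =
      (gammaSet G w).ncard + if GUnioccurrent G [x] (w ++ [x]) ∧ ¬ GPal G [x] then 1 else 0 :=
  ncard_eq_add_ite_of_subset_insert (gammaSet_finite w)
    (gammaSet_mono (List.subset_append_left w [x])) gammaSet_append_singleton_subset <| by
      have hx : GOccursIn G [x] (w ++ [x]) :=
        ⟨[x], mem_orbitG_self _, (List.suffix_append w [x]).isInfix⟩
      rw [gUnioccurrent_append_singleton_iff (List.suffix_append w [x]),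
        orbitG_singleton_mem_gammaSet_iff, orbitG_singleton_mem_gammaSet_iff]
      tauto

end Counting

section Lacunas

variable {A : Type*} {G : AMGroup A} {s w : List A} {x : A}

def lacunaSet (G : AMGroup A) (w : List A) : Set ℕ :=
  {i : ℕ | ∃ h : i < w.length,
    ¬ GUnioccurrent G [w.get ⟨i, h⟩] (w.take (i + 1)) ∧
    ∀ s : List A, IsGlps G (w.take (i + 1)) s →
      ¬ GUnioccurrent G s (w.take (i + 1))}

theorem lacunaSet_subset_Iio : lacunaSet G w ⊆ Set.Iio w.length := fun _ ⟨h, _⟩ => h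

theorem mem_lacunaSet_append_singleton_of_lt {i : ℕ} (hi : i < w.length) :
    i ∈ lacunaSet G (w ++ [x]) ↔ i ∈ lacunaSet G w := by
  simp [lacunaSet, hi, List.take_append_of_le_length (Nat.succ_le_of_lt hi),
    List.getElem_append_left hi, hi.le]

theorem length_mem_lacunaSet_append_singleton_iff (hs : IsGlps G (w ++ [x]) s) :
    w.length ∈ lacunaSet G (w ++ [x]) ↔
      ¬ GUnioccurrent G [x] (w ++ [x]) ∧ ¬ GUnioccurrent G s (w ++ [x]) := by
  have htake : (w ++ [x]).take (w.length + 1) = w ++ [x] := List.take_of_length_le (by simp)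
  simp only [lacunaSet, Set.mem_ofPred_eq, htake]
  exact ⟨fun ⟨_, hx, hlps⟩ => ⟨by simpa using hx, hlps s hs⟩,
    fun ⟨hx, hsu⟩ => ⟨by simp, by simpa using hx, fun t ht => hs.unique ht ▸ hsu⟩⟩

open scoped Classical in
theorem ncard_lacunaSet_append_singleton (hs : IsGlps G (w ++ [x]) s) :
    (lacunaSet G (w ++ [x])).ncard = (lacunaSet G w).ncard +
      if ¬ GUnioccurrent G [x] (w ++ [x]) ∧ ¬ GUnioccurrent G s (w ++ [x]) then 1 else 0 := by
  refine ncard_eq_add_ite_of_subset_insert (a := w.length)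
    ((Set.finite_Iio _).subset lacunaSet_subset_Iio)
    (fun i hi => (mem_lacunaSet_append_singleton_of_lt (lacunaSet_subset_Iio hi)).mpr hi)
    (fun i hi => ?_) ?_
  · have : i < w.length + 1 := by simpa using lacunaSet_subset_Iio hi
    rcases (Nat.lt_succ_iff_lt_or_eq.mp this) with hlt | rfl
    · exact Or.inr ((mem_lacunaSet_append_singleton_of_lt hlt).mp hi)
    · exact Or.inl rfl
  · rw [length_mem_lacunaSet_append_singleton_iff hs]
    exact and_iff_left fun h => Set.self_notMem_Iio (lacunaSet_subset_Iio h)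

end Lacunas

section Defect

variable {A : Type*} {G : AMGroup A}

theorem gUnioccurrent_isGlps_iff {s w : List A} {x : A} (hs : IsGlps G (w ++ [x]) s)
    (hx : GUnioccurrent G [x] (w ++ [x])) :
    GUnioccurrent G s (w ++ [x]) ↔ GPal G [x] := by
  have hxs : [x] <:+ w ++ [x] := List.suffix_append w [x]
  rw [gUnioccurrent_append_singleton_iff hxs] at hx
  rw [gUnioccurrent_append_singleton_iff hs.1]
  constructor
  · intro hsnew
    have hne : s ≠ [] := by
      rintro rfl
      exact hsnew gOccursIn_nil
    obtain ⟨s', rfl⟩ := List.suffix_of_suffix_length_le hxs hs.1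
      (List.length_pos_iff.mpr hne)
    rcases eq_or_ne s' [] with rfl | hs'
    · exact hs.2.1
    exact absurd (gOccursIn_of_gPal_append_suffix hs.1 hs.2.1 hs') hx
  · rintro hxp ⟨_, ⟨μ, hμ, rfl⟩, hinf⟩
    have hxs' : [x] <:+ s := List.suffix_of_suffix_length_le hxs hs.1 (hs.2.2 [x] hxs hxp)
    exact hx ⟨μ [x], ⟨μ, hμ, rfl⟩, (G.map_infix hμ hxs'.isInfix).trans hinf⟩

theorem ncard_palG_add_gammaG_add_ncard_lacunaSet (hanti : ∃ Θ ∈ G.carrier, IsAntimorphism Θ)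
    (w : List A) :
    (PalG G w).ncard + gammaG G w + (lacunaSet G w).ncard = w.length + 1 := by
  induction w using List.reverseRecOn with
  | nil =>
    have hpal : PalG G [] = {orbitG G []} := by
      ext
      constructor
      · rintro ⟨v, hinf, -, rfl⟩
        rw [List.infix_nil.mp hinf]
        rfl
      · rintro rfl
        exact ⟨[], List.infix_refl _, gPal_nil hanti, rfl⟩
    simp [hpal, gammaG_eq_ncard_gammaSet, gammaSet, lacunaSet]
  | append_singleton w x ih =>
    obtain ⟨s, hs⟩ := exists_isGlps hanti (w ++ [x])
    have key := gUnioccurrent_isGlps_iff hs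
    rw [gammaG_eq_ncard_gammaSet] at ih ⊢
    rw [ncard_palG_append_singleton hs, ncard_gammaSet_append_singleton,
      ncard_lacunaSet_append_singleton hs, List.length_append, List.length_singleton]
    split_ifs <;> first | omega | tauto

end Defect

theorem DG_eq_number_of_lacunas_general {A : Type*} (G : AMGroup A)
    (hanti : ∃ Θ ∈ G.carrier, IsAntimorphism Θ) (w : List A) :
    DG G w =
      {i : ℕ | ∃ h : i < w.length,
        ¬ GUnioccurrent G [w.get ⟨i, h⟩] (w.take (i + 1)) ∧
        ∀ s : List A, IsGlps G (w.take (i + 1)) s →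
          ¬ GUnioccurrent G s (w.take (i + 1))}.ncard := by
  have := ncard_palG_add_gammaG_add_ncard_lacunaSet hanti w
  show _ = (lacunaSet G w).ncard
  unfold DG
  omega

/-- The `G`-defect of `w` equals the number of `G`-lacunas in `w`: the number
of positions `i` such that neither the letter `w_i` nor the `G`-longest
palindromic suffix of `w_1 ⋯ w_i` is `G`-unioccurrent in `w_1 ⋯ w_i`. -/
theorem DG_eq_number_of_lacunas {A : Type*} [Fintype A] (G : AMGroup A)
    (hanti : ∃ Θ ∈ G.carrier, IsAntimorphism Θ) (w : List A) :
    DG G w =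
      {i : ℕ | ∃ h : i < w.length,
        ¬ GUnioccurrent G [w.get ⟨i, h⟩] (w.take (i + 1)) ∧
        ∀ s : List A, IsGlps G (w.take (i + 1)) s →
          ¬ GUnioccurrent G s (w.take (i + 1))}.ncard :=
  DG_eq_number_of_lacunas_general G hanti w
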